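/- Let p be a probability distribution on a product of finitely many finite types indexed by a finite set ι, and for I ⊆ ι let H(I) denote the Shannon entropy of the marginal on the coordinates in I. Then H, as a function on Finset ι, is submodular: H(A ∪ B) + H(A ∩ B) ≤ H(A) + H(B) for all A, B ⊆ ι. -/
import Mathlib


open Finset

/-- The Shannon entropy of the marginal of `p` on the coordinates in `A`. -/
noncomputable def margEnt {ι : Type*} [Fintype ι] [DecidableEq ι] {X : ι → Type*}
    [∀ i, Fintype (X i)] [∀ i, DecidableEq (X i)]
    (p : (∀ i, X i) → ℝ) (A : Finset ι) : ℝ :=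
  ∑ f : (∀ i : A, X i),
    Real.negMulLog
      (∑ g ∈ Finset.univ.filter (fun g : ∀ i, X i => ∀ i : A, g i = f i), p g)


open Finset

section Aux

variable {ι : Type*} [Fintype ι] [DecidableEq ι] {X : ι → Type*}
    [∀ i, Fintype (X i)] [∀ i, DecidableEq (X i)]

/-- Restriction of a full configuration to coordinates in `A`. -/
def resFn (A : Finset ι) (g : ∀ i, X i) : ∀ i : A, X i := fun i => g i

/-- Restriction between partial configuration spaces. -/
def rmapFn {A B : Finset ι} (h : B ⊆ A) (f : ∀ i : A, X i) : ∀ i : B, X i :=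
  fun i => f ⟨i.1, h i.2⟩

/-- The marginal of `p` on coordinates in `A`. -/
noncomputable def marg (p : (∀ i, X i) → ℝ) (A : Finset ι) (f : ∀ i : A, X i) : ℝ :=
  ∑ g ∈ univ.filter (fun g => resFn A g = f), p g

lemma marg_nonneg (p : (∀ i, X i) → ℝ) (hp : ∀ g, 0 ≤ p g) (A : Finset ι)
    (f : ∀ i : A, X i) : 0 ≤ marg p A f :=
  Finset.sum_nonneg fun g _ => hp g

lemma le_marg (p : (∀ i, X i) → ℝ) (hp : ∀ g, 0 ≤ p g) (A : Finset ι) (g : ∀ i, X i) :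
    p g ≤ marg p A (resFn A g) :=
  Finset.single_le_sum (fun i _ => hp i) (by simp)

lemma marg_le (p : (∀ i, X i) → ℝ) (hp : ∀ g, 0 ≤ p g) {A B : Finset ι} (h : B ⊆ A)
    (f : ∀ i : A, X i) : marg p A f ≤ marg p B (rmapFn h f) := by
  apply Finset.sum_le_sum_of_subset_of_nonneg
  · intro g hg
    simp only [mem_filter, mem_univ, true_and] at *
    rw [← hg]; rfl
  · exact fun g _ _ => hp g

lemma marg_total (p : (∀ i, X i) → ℝ) (A : Finset ι) :
    ∑ f, marg p A f = ∑ g, p g :=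
  Finset.sum_fiberwise univ (resFn A) p

lemma margEnt_eq (p : (∀ i, X i) → ℝ) (A : Finset ι) :
    margEnt p A = ∑ f, Real.negMulLog (marg p A f) := by
  refine Finset.sum_congr rfl fun f _ => ?_
  congr 1
  refine Finset.sum_congr ?_ fun _ _ => rfl
  ext g
  simp [resFn, funext_iff]

lemma ent_eq (p : (∀ i, X i) → ℝ) (A : Finset ι) :
    margEnt p A = ∑ g, p g * (-Real.log (marg p A (resFn A g))) := by
  rw [margEnt_eq,
    ← Finset.sum_fiberwise univ (resFn A) (fun g => p g * (-Real.log (marg p A (resFn A g))))]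
  refine Finset.sum_congr rfl fun f _ => ?_
  have h1 : ∀ g ∈ univ.filter (fun g => resFn A g = f),
      p g * (-Real.log (marg p A (resFn A g))) = p g * (-Real.log (marg p A f)) := by
    intro g hg
    rw [(mem_filter.mp hg).2]
  rw [Finset.sum_congr rfl h1, ← Finset.sum_mul, Real.negMulLog, marg]
  ring

lemma marg_consistent (p : (∀ i, X i) → ℝ) {A B : Finset ι} (h : B ⊆ A) (t : ∀ i : B, X i) :
    ∑ a ∈ univ.filter (fun a => rmapFn h a = t), marg p A a = marg p B t := by
  unfold marg
  rw [Finset.sum_fiberwise_eq_sum_filter]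
  refine Finset.sum_congr ?_ fun _ _ => rfl
  ext g
  simp only [mem_filter, mem_univ, true_and]
  exact Iff.rfl

end Aux

section Split

variable {ι : Type*} [Fintype ι] [DecidableEq ι] {X : ι → Type*}
    [∀ i, Fintype (X i)] [∀ i, DecidableEq (X i)]

/-- Glue partial configurations on `A` and `B` to one on `A ∪ B`. -/
def glueFn (A B : Finset ι) (a : ∀ i : A, X i) (b : ∀ i : B, X i) :
    ∀ i : (A ∪ B : Finset ι), X i := fun i =>
  if h : i.1 ∈ A then a ⟨i.1, h⟩
  else b ⟨i.1, (mem_union.mp i.2).resolve_left h⟩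

lemma split_sum (p : (∀ i, X i) → ℝ) (A B : Finset ι)
    (hAS : A ⊆ A ∪ B) (hBS : B ⊆ A ∪ B) (hTS : A ∩ B ⊆ A ∪ B)
    (hTA : A ∩ B ⊆ A) (hTB : A ∩ B ⊆ B)
    (t : ∀ i : (A ∩ B : Finset ι), X i) :
    ∑ f ∈ univ.filter (fun f : ∀ i : (A ∪ B : Finset ι), X i => rmapFn hTS f = t),
      marg p A (rmapFn hAS f) * marg p B (rmapFn hBS f)
    = marg p (A ∩ B) t * marg p (A ∩ B) t := by
  rw [show marg p (A ∩ B) t * marg p (A ∩ B) t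
      = (∑ a ∈ univ.filter (fun a => rmapFn hTA a = t), marg p A a)
        * (∑ b ∈ univ.filter (fun b => rmapFn hTB b = t), marg p B b) by
        rw [marg_consistent p hTA t, marg_consistent p hTB t],
    Finset.sum_mul_sum, ← Finset.sum_product']
  refine Finset.sum_nbij' (fun f => (rmapFn hAS f, rmapFn hBS f))
    (fun x => glueFn A B x.1 x.2) ?_ ?_ ?_ ?_ ?_
  · intro f hf
    simp only [mem_filter, mem_univ, true_and] at hf
    simp only [mem_product, mem_filter, mem_univ, true_and]
    exact ⟨hf, hf⟩
  · intro x hx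
    simp only [mem_product, mem_filter, mem_univ, true_and] at hx
    simp only [mem_filter, mem_univ, true_and]
    funext i
    have hiA : i.1 ∈ A := hTA i.2
    show glueFn A B x.1 x.2 ⟨i.1, hTS i.2⟩ = t i
    rw [glueFn, dif_pos hiA]
    exact congrFun hx.1 i
  · intro f hf
    funext i
    show glueFn A B _ _ i = f i
    rcases Finset.mem_union.mp i.2 with h | h
    · rw [glueFn, dif_pos h]; rfl
    · by_cases h' : i.1 ∈ A
      · rw [glueFn, dif_pos h']; rfl
      · rw [glueFn, dif_neg h']; rfl
  · intro x hx
    simp only [mem_product, mem_filter, mem_univ, true_and] at hx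
    ext i
    · show glueFn A B x.1 x.2 ⟨i.1, hAS i.2⟩ = x.1 i
      rw [glueFn, dif_pos i.2]
    · show glueFn A B x.1 x.2 ⟨i.1, hBS i.2⟩ = x.2 i
      by_cases h' : i.1 ∈ A
      · rw [glueFn, dif_pos h']
        have hiT : i.1 ∈ A ∩ B := Finset.mem_inter.mpr ⟨h', i.2⟩
        have h1 : x.1 ⟨i.1, h'⟩ = t ⟨i.1, hiT⟩ := congrFun hx.1 ⟨i.1, hiT⟩
        have h2 : x.2 i = t ⟨i.1, hiT⟩ := congrFun hx.2 ⟨i.1, hiT⟩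
        rw [h1, h2]
      · rw [glueFn, dif_neg h']
  · intro f hf
    rfl

end Split


/-- Submodularity of Shannon entropy (equivalent to strong subadditivity):
`H(A ∪ B) + H(A ∩ B) ≤ H(A) + H(B)` for marginals of a joint distribution. -/
theorem shannon_submodular {ι : Type*} [Fintype ι] [DecidableEq ι] {X : ι → Type*}
    [∀ i, Fintype (X i)] [∀ i, DecidableEq (X i)]
    (p : (∀ i, X i) → ℝ) (hp : ∀ g, 0 ≤ p g) (hsum : ∑ g, p g = 1)
    (A B : Finset ι) :
    margEnt p (A ∪ B) + margEnt p (A ∩ B) ≤ margEnt p A + margEnt p B := by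
  have hAS : A ⊆ A ∪ B := subset_union_left
  have hBS : B ⊆ A ∪ B := subset_union_right
  have hTA : A ∩ B ⊆ A := inter_subset_left
  have hTB : A ∩ B ⊆ B := inter_subset_right
  have hTS : A ∩ B ⊆ A ∪ B := hTA.trans hAS
  set S := A ∪ B with hS
  set T := A ∩ B with hT
  set R : (∀ i : S, X i) → ℝ := fun f =>
    marg p A (rmapFn hAS f) * marg p B (rmapFn hBS f)
      / (marg p S f * marg p T (rmapFn hTS f)) with hR
  -- Step 1: fiberwise collapse of the full sum
  have N1 : ∑ g, p g * R (resFn S g) = ∑ f, marg p S f * R f := by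
    rw [← Finset.sum_fiberwise univ (resFn S) (fun g => p g * R (resFn S g))]
    refine Finset.sum_congr rfl fun f _ => ?_
    have h1 : ∀ g ∈ univ.filter (fun g => resFn S g = f),
        p g * R (resFn S g) = p g * R f := by
      intro g hg; rw [(mem_filter.mp hg).2]
    rw [Finset.sum_congr rfl h1, ← Finset.sum_mul, marg]
  -- Step 2: pointwise bound on fibers
  have N2 : ∀ f : (∀ i : S, X i), marg p S f * R f ≤
      marg p A (rmapFn hAS f) * marg p B (rmapFn hBS f) / marg p T (rmapFn hTS f) := by
    intro f
    rcases eq_or_lt_of_le (marg_nonneg p hp S f) with hQ | hQ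
    · rw [← hQ, zero_mul]
      exact div_nonneg (mul_nonneg (marg_nonneg p hp _ _) (marg_nonneg p hp _ _))
        (marg_nonneg p hp _ _)
    · have hPT : 0 < marg p T (rmapFn hTS f) := lt_of_lt_of_le hQ (marg_le p hp hTS f)
      rw [hR]
      have : marg p S f * (marg p A (rmapFn hAS f) * marg p B (rmapFn hBS f)
          / (marg p S f * marg p T (rmapFn hTS f)))
          = marg p A (rmapFn hAS f) * marg p B (rmapFn hBS f) / marg p T (rmapFn hTS f) := by
        field_simp
      rw [this]
  -- Step 3: the remaining sum is at most 1
  have N3 : ∑ f : (∀ i : S, X i),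
      marg p A (rmapFn hAS f) * marg p B (rmapFn hBS f) / marg p T (rmapFn hTS f) ≤ 1 := by
    rw [← Finset.sum_fiberwise univ (rmapFn hTS)
      (fun f => marg p A (rmapFn hAS f) * marg p B (rmapFn hBS f) / marg p T (rmapFn hTS f))]
    have htot : ∑ t : (∀ i : T, X i), marg p T t = 1 := by rw [marg_total p T, hsum]
    rw [← htot]
    refine Finset.sum_le_sum fun t _ => ?_
    have h1 : ∀ f ∈ univ.filter (fun f : ∀ i : S, X i => rmapFn hTS f = t),
        marg p A (rmapFn hAS f) * marg p B (rmapFn hBS f) / marg p T (rmapFn hTS f)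
        = marg p A (rmapFn hAS f) * marg p B (rmapFn hBS f) / marg p T t := by
      intro f hf; rw [(mem_filter.mp hf).2]
    rw [Finset.sum_congr rfl h1, ← Finset.sum_div,
      split_sum p A B hAS hBS hTS hTA hTB t]
    rcases eq_or_lt_of_le (marg_nonneg p hp T t) with h0 | h0
    · rw [← h0]; simp
    · rw [mul_div_assoc, div_self h0.ne', mul_one]
  have Nfinal : ∑ g, p g * R (resFn S g) ≤ 1 :=
    le_trans (le_of_eq N1) (le_trans (Finset.sum_le_sum fun f _ => N2 f) N3)
  -- pointwise logarithm identity
  have pointwise : ∀ g, p g * Real.log (R (resFn S g)) =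
      p g * (Real.log (marg p A (resFn A g)) + Real.log (marg p B (resFn B g))
        - Real.log (marg p S (resFn S g)) - Real.log (marg p T (resFn T g))) := by
    intro g
    rcases eq_or_lt_of_le (hp g) with h0 | h0
    · rw [← h0, zero_mul, zero_mul]
    · have hA' : 0 < marg p A (resFn A g) := lt_of_lt_of_le h0 (le_marg p hp A g)
      have hB' : 0 < marg p B (resFn B g) := lt_of_lt_of_le h0 (le_marg p hp B g)
      have hS' : 0 < marg p S (resFn S g) := lt_of_lt_of_le h0 (le_marg p hp S g)
      have hT' : 0 < marg p T (resFn T g) := lt_of_lt_of_le h0 (le_marg p hp T g)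
      have e1 : rmapFn hAS (resFn S g) = resFn A g := rfl
      have e2 : rmapFn hBS (resFn S g) = resFn B g := rfl
      have e3 : rmapFn hTS (resFn S g) = resFn T g := rfl
      rw [hR]
      simp only [e1, e2, e3]
      rw [Real.log_div (mul_pos hA' hB').ne' (mul_pos hS' hT').ne',
        Real.log_mul hA'.ne' hB'.ne', Real.log_mul hS'.ne' hT'.ne']
      ring
  -- key inequality
  have key : ∑ g, p g * (Real.log (marg p A (resFn A g)) + Real.log (marg p B (resFn B g))
      - Real.log (marg p S (resFn S g)) - Real.log (marg p T (resFn T g))) ≤ 0 := by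
    rw [← Finset.sum_congr rfl fun g _ => pointwise g]
    have step : ∀ g ∈ (univ : Finset (∀ i, X i)),
        p g * Real.log (R (resFn S g)) ≤ p g * (R (resFn S g) - 1) := by
      intro g _
      rcases eq_or_lt_of_le (hp g) with h0 | h0
      · rw [← h0, zero_mul, zero_mul]
      · have hA' : 0 < marg p A (resFn A g) := lt_of_lt_of_le h0 (le_marg p hp A g)
        have hB' : 0 < marg p B (resFn B g) := lt_of_lt_of_le h0 (le_marg p hp B g)
        have hS' : 0 < marg p S (resFn S g) := lt_of_lt_of_le h0 (le_marg p hp S g)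
        have hT' : 0 < marg p T (resFn T g) := lt_of_lt_of_le h0 (le_marg p hp T g)
        have hRpos : 0 < R (resFn S g) := by
          rw [hR]
          exact div_pos (mul_pos hA' hB') (mul_pos hS' hT')
        exact mul_le_mul_of_nonneg_left (Real.log_le_sub_one_of_pos hRpos) h0.le
    calc ∑ g, p g * Real.log (R (resFn S g))
        ≤ ∑ g, p g * (R (resFn S g) - 1) := Finset.sum_le_sum step
      _ = (∑ g, p g * R (resFn S g)) - ∑ g, p g := by
          simp only [mul_sub, mul_one, Finset.sum_sub_distrib]
      _ ≤ 1 - 1 := by rw [hsum]; exact sub_le_sub_right Nfinal 1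
      _ = 0 := by ring
  -- final assembly
  rw [ent_eq p S, ent_eq p T, ent_eq p A, ent_eq p B]
  simp only [mul_sub, mul_add, Finset.sum_sub_distrib, Finset.sum_add_distrib] at key
  simp only [mul_neg, Finset.sum_neg_distrib]
  linarith
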